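/- Let (V, ⟨·,·⟩) be a finite-dimensional real inner product space and ω an arbitrary linear form on V (no smallness assumption). Then h(u,v) := ⟨u,v⟩ + ω(u)·ω(v) is an inner product on V, the Fermat metric F(v) = √(⟨v,v⟩ + ω(v)²) + ω(v) satisfies F(v) > 0 for every v ≠ 0, and the fundamental tensor of L = F² is positive definite at every v ≠ 0; that is, every Fermat metric is a Randers (Finsler) metric. -/

import Mathlib

open scoped RealInnerProductSpace

/-!
With `h(u, v) = ⟪u, v⟫ + ω u * ω v`, the Fermat metric is the Randers metric `F = N + ω` with
`N v = √(h(v, v))`, and `|ω v| < N v` for `v ≠ 0`. Differentiating `F²` twice gives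
`g_v(u, u) = F v * (h(u, u) h(v, v) - h(v, u)²) / (N v)³ + (h(v, u) / N v + ω u)²`.
The first term is nonnegative by Cauchy–Schwarz for `h` and vanishes only when `u = c • v`;
then the second term is `(c * F v)²`, which is positive because `c ≠ 0` and `F v > 0`.
-/

/-- The fundamental tensor of a (pseudo-)Finsler-type Lagrangian `L` at a vector `v`:
`g_v(u,w) = (1/2) · ∂²/∂t∂s L(v + t u + s w)|_{t=s=0}`. -/
noncomputable def fundTensor {V : Type*} [NormedAddCommGroup V] [NormedSpace ℝ V]
    (L : V → ℝ) (v u w : V) : ℝ :=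
  (1 / 2) * fderiv ℝ (fderiv ℝ L) v u w

open Filter Topology ContinuousLinearMap

section

variable {E : Type*} [NormedAddCommGroup E] [NormedSpace ℝ E]

theorem fderiv_fderiv_sq_apply {f : E → ℝ} {f' : E → StrongDual ℝ E}
    {f'' : E →L[ℝ] StrongDual ℝ E} {v : E} (hf : ∀ᶠ x in 𝓝 v, HasFDerivAt f (f' x) x)
    (hf' : HasFDerivAt f' f'' v) (u w : E) :
    fderiv ℝ (fderiv ℝ fun x => f x ^ 2) v u w = 2 * (f v * f'' u w + f' v u * f' v w) := by
  have hD : fderiv ℝ (fun x => f x ^ 2) =ᶠ[𝓝 v] fun x => (2 * f x) • f' x := by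
    filter_upwards [hf] with x hx
    simpa using (hx.pow 2).fderiv
  rw [hD.fderiv_eq, ((hf.self_of_nhds.const_mul 2).fun_smul hf').fderiv]
  simp only [add_apply, smul_apply, smulRight_apply, smul_eq_mul]
  ring

variable (B : E →L[ℝ] E →L[ℝ] ℝ)

theorem hasFDerivAt_apply_self (hB : ∀ x y, B x y = B y x) (x : E) :
    HasFDerivAt (fun y => B y y) (2 • B x) x := by
  refine (B.hasFDerivAt_of_bilinear (hasFDerivAt_id x) (hasFDerivAt_id x)).congr_fderiv ?_
  ext z
  simp [hB z x, two_smul]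

theorem hasFDerivAt_sqrt_apply_self (hB : ∀ x y, B x y = B y x) {x : E} (hx : 0 < B x x) :
    HasFDerivAt (fun y => √(B y y)) ((√(B x x))⁻¹ • B x) x := by
  refine ((hasFDerivAt_apply_self B hB x).sqrt hx.ne').congr_fderiv ?_
  have hN : √(B x x) ≠ 0 := (Real.sqrt_pos.2 hx).ne'
  ext z
  simp only [smul_apply, smul_eq_mul, nsmul_eq_mul, Nat.cast_ofNat]
  field_simp

theorem hasFDerivAt_inv_sqrt_smul_apply_self (hB : ∀ x y, B x y = B y x) {v : E}
    (hv : 0 < B v v) :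
    HasFDerivAt (fun x => (√(B x x))⁻¹ • B x)
      ((√(B v v))⁻¹ • B - ((√(B v v) ^ 3)⁻¹ • B v).smulRight (B v)) v := by
  have hN : √(B v v) ≠ 0 := (Real.sqrt_pos.2 hv).ne'
  have hinv := (hasDerivAt_inv hN).comp_hasFDerivAt v (hasFDerivAt_sqrt_apply_self B hB hv)
  refine (hinv.fun_smul B.hasFDerivAt).congr_fderiv ?_
  ext u w
  simp only [add_apply, sub_apply, smul_apply, smulRight_apply, smul_eq_mul, Function.comp_apply]
  field_simp
  ring

/-- Cauchy–Schwarz for `B`, with the defect written as `B` of the component of `u`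
`B`-orthogonal to `v`. -/
theorem apply_self_mul_apply_sub_smul_self (hB : ∀ x y, B x y = B y x) {v : E} (hv : B v v ≠ 0)
    (u : E) :
    B v v * B (u - (B v u / B v v) • v) (u - (B v u / B v v) • v) = B u u * B v v - B v u ^ 2 := by
  simp only [map_sub, map_smul, sub_apply, smul_apply, smul_eq_mul, hB u v]
  field_simp
  ring

theorem fundTensor_sq_sqrt_apply_self_add_pos (hB : ∀ x y, B x y = B y x)
    (hBpos : ∀ x, x ≠ 0 → 0 < B x x) (β : StrongDual ℝ E) {v : E} (hv : v ≠ 0)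
    (hFv : 0 < √(B v v) + β v) {u : E} (hu : u ≠ 0) :
    0 < fundTensor (fun x => (√(B x x) + β x) ^ 2) v u u := by
  have hBv := hBpos v hv
  have hN : 0 < √(B v v) := Real.sqrt_pos.2 hBv
  have hF' : ∀ᶠ x in 𝓝 v, HasFDerivAt (fun x => √(B x x) + β x) ((√(B x x))⁻¹ • B x + β) x := by
    filter_upwards [isOpen_compl_singleton.mem_nhds hv] with x hx
    exact (hasFDerivAt_sqrt_apply_self B hB (hBpos x hx)).add β.hasFDerivAt
  have hF'' := (hasFDerivAt_inv_sqrt_smul_apply_self B hB hBv).add_const β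
  have hval : fundTensor (fun x => (√(B x x) + β x) ^ 2) v u u =
      (√(B v v) + β v) * ((B u u * B v v - B v u ^ 2) / √(B v v) ^ 3) +
        (B v u / √(B v v) + β u) ^ 2 := by
    rw [fundTensor, fderiv_fderiv_sq_apply hF' hF'']
    simp only [add_apply, sub_apply, smul_apply, smulRight_apply, smul_eq_mul]
    field_simp
    linear_combination (β v * B u u + √(B v v) * B u u) * Real.sq_sqrt hBv.le
  rw [hval, ← apply_self_mul_apply_sub_smul_self B hB hBv.ne']
  set c := B v u / B v v
  by_cases hpar : u - c • v = 0
  · have huv : u = c • v := sub_eq_zero.1 hpar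
    have hc : c ≠ 0 := by rintro hc; simp [hc] at huv; exact hu huv
    have hβu : β u = c * β v := by rw [huv, map_smul, smul_eq_mul]
    have hBvu : B v u = c * √(B v v) ^ 2 := by
      rw [Real.sq_sqrt hBv.le, div_mul_cancel₀ _ hBv.ne']
    have hdiff : B v u / √(B v v) + β u = c * (√(B v v) + β v) := by
      rw [hβu, hBvu]
      field_simp
    rw [hpar, hdiff]
    simp only [map_zero, mul_zero, zero_div, zero_add]
    exact pow_two_pos_of_ne_zero (mul_ne_zero hc hFv.ne')
  · have hgram := mul_pos hBv (hBpos _ hpar)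
    exact add_pos_of_pos_of_nonneg (mul_pos hFv (div_pos hgram (pow_pos hN 3))) (sq_nonneg _)

end

section

variable {V : Type*} [NormedAddCommGroup V] [InnerProductSpace ℝ V]

noncomputable def fermatForm (ω : StrongDual ℝ V) : V →L[ℝ] V →L[ℝ] ℝ :=
  (show V →L[ℝ] V →L[ℝ] ℝ from innerSL ℝ) + ω.smulRight ω

@[simp]
theorem fermatForm_apply (ω : StrongDual ℝ V) (x y : V) :
    fermatForm ω x y = ⟪x, y⟫ + ω x * ω y :=
  rfl

theorem fermatForm_comm (ω : StrongDual ℝ V) (x y : V) : fermatForm ω x y = fermatForm ω y x := by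
  simp only [fermatForm_apply, real_inner_comm x y, mul_comm (ω x)]

theorem fermatForm_apply_self_pos (ω : StrongDual ℝ V) {x : V} (hx : x ≠ 0) :
    0 < fermatForm ω x x :=
  add_pos_of_pos_of_nonneg (real_inner_self_pos.2 hx) (mul_self_nonneg _)

theorem sqrt_inner_self_add_sq_add_pos {v : V} (hv : v ≠ 0) (a : ℝ) :
    0 < √(⟪v, v⟫ + a ^ 2) + a := by
  have hlt : |a| < √(⟪v, v⟫ + a ^ 2) := by
    rw [← Real.sqrt_sq_eq_abs]
    exact Real.sqrt_lt_sqrt (sq_nonneg a) (by linarith [real_inner_self_pos.2 hv])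
  linarith [neg_abs_le a]

end

/-- For an arbitrary linear form `ω` (no smallness assumption):
`h(u,v) = ⟨u,v⟩ + ω(u)ω(v)` is an inner product on `V` (symmetric, bilinear and
positive definite), the Fermat metric `F(v) = √(⟨v,v⟩ + ω(v)²) + ω(v)` is positive
for every `v ≠ 0`, and the fundamental tensor of `L = F²` is positive definite at
every `v ≠ 0`; that is, every Fermat metric is a Randers (Finsler) metric. -/
theorem fermat_is_randers
    {V : Type*} [NormedAddCommGroup V] [InnerProductSpace ℝ V] [FiniteDimensional ℝ V]
    (ω : V →ₗ[ℝ] ℝ)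
    (h : V → V → ℝ)
    (hh : ∀ u v : V, h u v = ⟪u, v⟫ + ω u * ω v)
    (F L : V → ℝ)
    (hF : ∀ v : V, F v = Real.sqrt (⟪v, v⟫ + (ω v) ^ 2) + ω v)
    (hL : ∀ v : V, L v = (F v) ^ 2) :
    ((∀ u v : V, h u v = h v u) ∧
      (∀ (a : ℝ) (u u' v : V), h (a • u + u') v = a * h u v + h u' v) ∧
      (∀ v : V, v ≠ 0 → 0 < h v v)) ∧
    (∀ v : V, v ≠ 0 → 0 < F v) ∧
    (∀ v : V, v ≠ 0 → ∀ u : V, u ≠ 0 → 0 < fundTensor L v u u) := by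
  set ω' := LinearMap.toContinuousLinearMap ω
  have hh' : ∀ u v, h u v = fermatForm ω' u v := hh
  have hF' : ∀ v, F v = √(fermatForm ω' v v) + ω' v := fun v => by
    rw [hF, fermatForm_apply, sq]; rfl
  have hL' : L = fun v => (√(fermatForm ω' v v) + ω' v) ^ 2 := funext fun v => by rw [hL, hF']
  have hFpos : ∀ v : V, v ≠ 0 → 0 < F v := fun v hv => by
    rw [hF]; exact sqrt_inner_self_add_sq_add_pos hv _
  refine ⟨⟨fun u v => by rw [hh', hh', fermatForm_comm], fun a u u' v => by simp [hh'],
    fun v hv => hh' v v ▸ fermatForm_apply_self_pos ω' hv⟩, hFpos, fun v hv u hu => ?_⟩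
  rw [hL']
  exact fundTensor_sq_sqrt_apply_self_add_pos _ (fermatForm_comm ω')
    (fun x hx => fermatForm_apply_self_pos ω' hx) ω' hv (hF' v ▸ hFpos v hv) hu
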